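/- arXiv:2212.04308 — 6 statements merged into one kernel-verified Lean document; each statement's English description precedes it below -/
import Mathlib

section
/- Let K be a convex body in ℝ^d and let c be the centroid of K. Then K − c ⊆ −d·(K − c). -/
/-!
Let `f` be a linear functional with `f ≤ M` on `K`, and `p ∈ K`. Scaling `K` about `p` by
`1 - t / (M - f p)` lands inside the superlevel set `{M - f ≥ t}` of `K`, so by the layer-cake
formula `∫_K (M - f) ≥ vol K · (M - f p) / (d + 1)`, i.e. `M - f p ≤ (d + 1) (M - f c)`.
Taking `p = x`, no functional separates `c + (c - x) / d` from `K`, so this point lies in `K`;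
that is the inclusion.
-/

open Pointwise MeasureTheory Set Module AffineMap

theorem Convex.image_homothety_subset {𝕜 E : Type*} [Field 𝕜] [LinearOrder 𝕜]
    [IsStrictOrderedRing 𝕜] [AddCommGroup E] [Module 𝕜 E] {K : Set E} (hK : Convex 𝕜 K)
    {p : E} (hp : p ∈ K) {t : 𝕜} (ht : t ∈ Icc 0 1) : homothety p t '' K ⊆ K := by
  rintro _ ⟨y, hy, rfl⟩
  rw [homothety_eq_lineMap]
  exact hK.lineMap_mem hp hy ht

theorem integral_Ioc_sub_div_pow (n : ℕ) {T : ℝ} (hT : 0 < T) :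
    ∫ t in Ioc 0 T, ((T - t) / T) ^ n = T / (n + 1) := by
  rw [← intervalIntegral.integral_of_le hT.le,
    intervalIntegral.integral_comp_sub_left (fun s => (s / T) ^ n) T]
  simp only [sub_self, sub_zero, div_pow, intervalIntegral.integral_div, integral_pow]
  field_simp
  ring

section

variable {E : Type*} [NormedAddCommGroup E] [NormedSpace ℝ E] [MeasurableSpace E] [BorelSpace E]
  [FiniteDimensional ℝ E] (μ : Measure E) [μ.IsAddHaarMeasure] {K : Set E}

theorem Convex.ofReal_pow_mul_measure_le_measure_inter (hK : Convex ℝ K) (f : E →L[ℝ] ℝ) {p : E} (hp : p ∈ K)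
    {M : ℝ} (hM : ∀ y ∈ K, f y ≤ M) {r : ℝ} (hr : r ∈ Icc 0 1) :
    ENNReal.ofReal (r ^ finrank ℝ E) * μ K ≤ μ (K ∩ {y | (1 - r) * (M - f p) ≤ M - f y}) := by
  have hsub : homothety p r '' K ⊆ K ∩ {y | (1 - r) * (M - f p) ≤ M - f y} := by
    refine subset_inter (hK.image_homothety_subset hp hr) ?_
    rintro _ ⟨y, hy, rfl⟩
    have hfy : f (homothety p r y) = f p + r * (f y - f p) := by
      simp only [homothety_apply, vsub_eq_sub, vadd_eq_add, map_add, map_sub, map_smul, smul_eq_mul]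
      ring
    simp only [mem_ofPred_eq, hfy]
    nlinarith [hM y hy, hr.1]
  calc ENNReal.ofReal (r ^ finrank ℝ E) * μ K = μ (homothety p r '' K) := by
        rw [Measure.addHaar_image_homothety, abs_of_nonneg (pow_nonneg hr.1 _)]
    _ ≤ _ := measure_mono hsub

theorem Convex.measureReal_mul_sub_div_le_setIntegral (hKc : IsCompact K) (hK : Convex ℝ K)
    (f : E →L[ℝ] ℝ) {p : E} (hp : p ∈ K) {M : ℝ} (hM : ∀ y ∈ K, f y ≤ M) :
    μ.real K * (M - f p) / (finrank ℝ E + 1) ≤ ∫ y in K, (M - f y) ∂μ := by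
  have hg : ∀ y ∈ K, 0 ≤ M - f y := fun y hy => sub_nonneg.2 (hM y hy)
  have hg_ae : 0 ≤ᵐ[μ.restrict K] fun y => M - f y :=
    ae_restrict_of_forall_mem hKc.measurableSet hg
  rcases (hg p hp).eq_or_lt with hT | hT
  · rw [← hT, mul_zero, zero_div]
    exact integral_nonneg_of_ae hg_ae
  set T := M - f p
  set d := finrank ℝ E
  have hint : IntegrableOn (fun y => M - f y) K μ :=
    (continuous_const.sub f.continuous).continuousOn.integrableOn_compact hKc
  have hlayer : ∀ t ∈ Ioc 0 T,
      ENNReal.ofReal (((T - t) / T) ^ d) * μ K ≤ μ.restrict K {y | t ≤ M - f y} := by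
    intro t ht
    have h := hK.ofReal_pow_mul_measure_le_measure_inter μ f hp hM
      ⟨div_nonneg (sub_nonneg.2 ht.2) hT.le, (div_le_one hT).2 (by linarith [ht.1])⟩
    rwa [show (1 - (T - t) / T) * T = t by field_simp; ring, inter_comm,
      ← Measure.restrict_apply' hKc.measurableSet] at h
  rw [← ENNReal.ofReal_le_ofReal_iff (integral_nonneg_of_ae hg_ae),
    ofReal_integral_eq_lintegral_ofReal hint hg_ae,
    lintegral_eq_lintegral_meas_le _ hg_ae hint.aemeasurable]
  calc ENNReal.ofReal (μ.real K * T / (d + 1))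
      = ∫⁻ t in Ioc 0 T, ENNReal.ofReal (((T - t) / T) ^ d) * μ K := by
        rw [lintegral_mul_const' _ _ hKc.measure_lt_top.ne,
          ← ofReal_integral_eq_lintegral_ofReal (by fun_prop : Continuous _).integrableOn_Ioc
            (ae_restrict_of_forall_mem measurableSet_Ioc fun t ht =>
              pow_nonneg (div_nonneg (sub_nonneg.2 ht.2) hT.le) _),
          integral_Ioc_sub_div_pow d hT, measureReal_def,
          mul_div_assoc, ENNReal.ofReal_mul ENNReal.toReal_nonneg,
          ENNReal.ofReal_toReal hKc.measure_lt_top.ne, mul_comm]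
    _ ≤ ∫⁻ t in Ioc 0 T, μ.restrict K {y | t ≤ M - f y} :=
        setLIntegral_mono' measurableSet_Ioc hlayer
    _ ≤ ∫⁻ t in Ioi 0, μ.restrict K {y | t ≤ M - f y} :=
        lintegral_mono_set Ioc_subset_Ioi_self

theorem Convex.sub_le_mul_sub_apply_setAverage (hKc : IsCompact K) (hK : Convex ℝ K)
    (hK0 : μ K ≠ 0) (f : E →L[ℝ] ℝ) {p : E} (hp : p ∈ K) {M : ℝ} (hM : ∀ y ∈ K, f y ≤ M) :
    M - f p ≤ (finrank ℝ E + 1) * (M - f (⨍ y in K, y ∂μ)) := by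
  have hvol : 0 < μ.real K := ENNReal.toReal_pos hK0 hKc.measure_lt_top.ne
  have hid : IntegrableOn (fun x => x) K μ := continuousOn_id.integrableOn_compact hKc
  have hint : ∫ y in K, (M - f y) ∂μ = μ.real K * (M - f (⨍ y in K, y ∂μ)) := by
    rw [integral_sub (integrableOn_const (C := M) hKc.measure_lt_top.ne) (f.integrable_comp hid),
      f.integral_comp_comm hid, setAverage_eq, map_smul, smul_eq_mul, setIntegral_const,
      smul_eq_mul]
    field_simp
  have h := hK.measureReal_mul_sub_div_le_setIntegral μ hKc f hp hM
  rw [hint, mul_div_assoc, mul_le_mul_iff_right₀ hvol, div_le_iff₀ (by positivity)] at h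
  linarith

theorem Convex.setAverage_add_inv_smul_sub_mem (hKc : IsCompact K) (hK : Convex ℝ K)
    (hK0 : μ K ≠ 0) {x : E} (hx : x ∈ K) :
    ⨍ y in K, y ∂μ + (finrank ℝ E : ℝ)⁻¹ • (⨍ y in K, y ∂μ - x) ∈ K := by
  set c := ⨍ y in K, y ∂μ
  set d : ℝ := (finrank ℝ E : ℝ)
  by_contra hz
  obtain ⟨f, M, hfK, hMz⟩ := geometric_hahn_banach_closed_point hK hKc.isClosed hz
  have h := hK.sub_le_mul_sub_apply_setAverage μ hKc hK0 f hx fun y hy => (hfK y hy).le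
  have hd : d⁻¹ * d ≤ 1 := inv_mul_le_one_of_le₀ le_rfl (Nat.cast_nonneg _)
  have hfx := hfK x hx
  simp only [map_add, map_smul, map_sub, smul_eq_mul] at hMz
  nlinarith [(by positivity : 0 ≤ d⁻¹)]

theorem Convex.image_sub_setAverage_subset_neg_finrank_smul (hKc : IsCompact K)
    (hK : Convex ℝ K) (hK0 : μ K ≠ 0) :
    (fun x => x - ⨍ y in K, y ∂μ) '' K ⊆
      (-(finrank ℝ E : ℝ)) • ((fun x => x - ⨍ y in K, y ∂μ) '' K) := by
  rintro _ ⟨x, hx, rfl⟩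
  dsimp only
  rcases (finrank ℝ E).eq_zero_or_pos with hd | hd
  · have h0 := finrank_zero_iff_forall_zero.1 hd
    rw [h0 (x - _)]
    exact zero_mem_smul_set ⟨x, hx, h0 _⟩
  refine ⟨_, ⟨_, hK.setAverage_add_inv_smul_sub_mem μ hKc hK0 hx, rfl⟩, ?_⟩
  dsimp only
  rw [add_sub_cancel_left, smul_smul, neg_mul, mul_inv_cancel₀ (by positivity), neg_smul,
    one_smul, neg_sub]

end

theorem centroid_inclusion (d : ℕ) (K : Set (EuclideanSpace ℝ (Fin d)))
    (hKc : IsCompact K) (hKconv : Convex ℝ K) (hKint : (interior K).Nonempty)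
    (c : EuclideanSpace ℝ (Fin d))
    (hc : c = ⨍ x in K, x ∂volume) :
    (fun x => x - c) '' K ⊆ (-(d : ℝ)) • ((fun x => x - c) '' K) := by
  have hK0 : volume K ≠ 0 := fun h =>
    isOpen_interior.measure_ne_zero volume hKint (measure_mono_null interior_subset h)
  have h := hKconv.image_sub_setAverage_subset_neg_finrank_smul volume hKc hK0
  rwa [finrank_euclideanSpace_fin, ← hc] at h
end

section
/- Let K be a convex body in ℝ^d and let c be the centroid of a maximal-volume simplex contained in K. Then K − c ⊆ −d·(K − c). -/
/-!
Let `λⱼ` be the barycentric coordinates with respect to the maximal simplex `S`. Replacing the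
`j`-th vertex of `S` by a point `x` is the image of `S` under the affine map `p ↦ p + λⱼ(p)(x - wⱼ)`,
whose determinant is `λⱼ(x)`; so maximality of `S` forces `|λⱼ(x)| ≤ 1` for every `x ∈ K`.
The point `y = c - (x - c)/d` has coordinates `(1 - λⱼ(x))/d ≥ 0`, hence lies in `S ⊆ K`,
and `x - c = -d (y - c)`.
-/

open Pointwise MeasureTheory

open Set AffineMap

namespace Finset

open scoped Finset

theorem centroid_eq_inv_card_smul_sum {k V ι : Type*} [Field k] [CharZero k] [AddCommGroup V]
    [Module k V] {s : Finset ι} (hs : s.Nonempty) (p : ι → V) :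
    s.centroid k p = (#s : k)⁻¹ • ∑ i ∈ s, p i := by
  rw [centroid_def, affineCombination_eq_linear_combination _ _ _
    (s.sum_centroidWeights_eq_one_of_nonempty k hs), smul_sum]
  simp only [centroidWeights_apply]

end Finset

namespace AffineMap

variable {k V : Type*} [Ring k] [AddCommGroup V] [Module k V]

def transvection (g : V →ᵃ[k] k) (v : V) : V →ᵃ[k] V where
  toFun p := p + g p • v
  linear := LinearMap.transvection g.linear v
  map_vadd' p q := by
    have hg : g (q + p) = g.linear q + g p := g.map_vadd p q
    simp only [vadd_eq_add, LinearMap.transvection.apply, hg, add_smul]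
    abel

@[simp]
theorem transvection_apply (g : V →ᵃ[k] k) (v p : V) : transvection g v p = p + g p • v := rfl

@[simp]
theorem transvection_linear (g : V →ᵃ[k] k) (v : V) :
    (transvection g v).linear = LinearMap.transvection g.linear v := rfl

end AffineMap

theorem Convex.convexHull_range_update_subset {𝕜 E ι : Type*} [Field 𝕜] [LinearOrder 𝕜]
    [IsStrictOrderedRing 𝕜] [AddCommGroup E] [Module 𝕜 E] [DecidableEq ι] {s : Set E}
    (hs : Convex 𝕜 s) {p : ι → E} (hp : convexHull 𝕜 (range p) ⊆ s) {x : E} (hx : x ∈ s) {j : ι} :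
    convexHull 𝕜 (range (Function.update p j x)) ⊆ s :=
  convexHull_min (range_subset_iff.2 <| (Function.forall_update_iff p (p := fun _ y => y ∈ s)).2
    ⟨hx, fun i _ => hp (subset_convexHull 𝕜 _ (mem_range_self i))⟩) hs

theorem MeasureTheory.Measure.addHaar_image_affineMap {E : Type*} [NormedAddCommGroup E]
    [NormedSpace ℝ E] [MeasurableSpace E] [BorelSpace E] [FiniteDimensional ℝ E]
    (μ : Measure E) [μ.IsAddHaarMeasure] (f : E →ᵃ[ℝ] E) (s : Set E) :
    μ (f '' s) = ENNReal.ofReal |LinearMap.det f.linear| * μ s := by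
  have : f '' s = (· + f 0) '' (f.linear '' s) := by
    rw [← image_comp]
    exact image_congr' fun p => congrFun f.decomp p
  rw [this, image_add_right, measure_preimage_add_right, Measure.addHaar_image_linearMap]

namespace AffineBasis

section Field

variable {ι k V : Type*} [Field k] [AddCommGroup V] [Module k V] (b : AffineBasis ι k V)

theorem transvection_comp_eq_update [DecidableEq ι] (j : ι) (x : V) :
    transvection (b.coord j) (x - b j) ∘ b = Function.update b j x := by
  funext i
  rcases eq_or_ne i j with rfl | hij
  · simp
  · simp [b.coord_apply_ne hij.symm, hij]

theorem det_transvection_linear [FiniteDimensional k V] (j : ι) (x : V) :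
    LinearMap.det (transvection (b.coord j) (x - b j)).linear = b.coord j x := by
  rw [transvection_linear, LinearMap.transvection.det, ← vsub_eq_sub, linearMap_vsub,
    coord_apply_eq, vsub_eq_sub]
  ring

end Field

section Real

variable {ι E : Type*} [NormedAddCommGroup E] [NormedSpace ℝ E] [MeasurableSpace E] [BorelSpace E]
  [FiniteDimensional ℝ E] (μ : Measure E) [μ.IsAddHaarMeasure] (b : AffineBasis ι ℝ E)

theorem addHaar_convexHull_update [DecidableEq ι] (j : ι) (x : E) :
    μ (convexHull ℝ (range (Function.update b j x)))
      = ENNReal.ofReal |b.coord j x| * μ (convexHull ℝ (range b)) := by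
  rw [← b.transvection_comp_eq_update, range_comp, ← AffineMap.image_convexHull,
    Measure.addHaar_image_affineMap, det_transvection_linear]

theorem abs_coord_le_one_of_addHaar_convexHull_update_le [Fintype ι] [DecidableEq ι] {j : ι}
    {x : E} (h : μ (convexHull ℝ (range (Function.update b j x))) ≤ μ (convexHull ℝ (range b))) :
    |b.coord j x| ≤ 1 := by
  have hpos : μ (convexHull ℝ (range b)) ≠ 0 :=
    (Measure.measure_pos_of_nonempty_interior μ ⟨_, b.centroid_mem_interior_convexHull⟩).ne'
  have hfin : μ (convexHull ℝ (range b)) ≠ ⊤ :=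
    ((finite_range b).isCompact_convexHull ℝ).measure_lt_top.ne
  rwa [addHaar_convexHull_update, ← ENNReal.le_div_iff_mul_le (Or.inl hpos) (Or.inl hfin),
    ENNReal.div_self hpos hfin, ENNReal.ofReal_le_one] at h

end Real

section LinearOrderedField

variable {ι k V : Type*} [Fintype ι] [Field k] [LinearOrder k] [IsStrictOrderedRing k]
  [AddCommGroup V] [Module k V] (b : AffineBasis ι k V)

theorem lineMap_centroid_mem_convexHull {n : ℕ} (hn : Fintype.card ι = n + 1) {x : V}
    (hx : ∀ i, b.coord i x ≤ 1) :
    lineMap (Finset.univ.centroid k b) x (-(n : k)⁻¹) ∈ convexHull k (range b) := by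
  rw [b.convexHull_eq_nonneg_coord]
  intro i
  rw [apply_lineMap, b.coord_apply_centroid (Finset.mem_univ i), Finset.card_univ,
    hn, lineMap_apply_ring']
  -- the `i`-th coordinate is `(1 - b.coord i x) / n`
  rcases eq_or_ne n 0 with rfl | hn0
  · simp
  · have hx' := hx i
    have : (0 : k) < n := by positivity
    field_simp
    push_cast
    nlinarith

end LinearOrderedField

end AffineBasis

theorem simplex_centroid_inclusion_general (d : ℕ) (K : Set (EuclideanSpace ℝ (Fin d)))
    (hKconv : Convex ℝ K)
    (w : Fin (d + 1) → EuclideanSpace ℝ (Fin d))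
    (hw : AffineIndependent ℝ w)
    (hwK : convexHull ℝ (Set.range w) ⊆ K)
    (hmax : ∀ w' : Fin (d + 1) → EuclideanSpace ℝ (Fin d),
      convexHull ℝ (Set.range w') ⊆ K →
      volume (convexHull ℝ (Set.range w')) ≤ volume (convexHull ℝ (Set.range w)))
    (c : EuclideanSpace ℝ (Fin d))
    (hc : c = ((d : ℝ) + 1)⁻¹ • ∑ i, w i) :
    (fun x => x - c) '' K ⊆ (-(d : ℝ)) • ((fun x => x - c) '' K) := by
  classical
  let b : AffineBasis (Fin (d + 1)) ℝ (EuclideanSpace ℝ (Fin d)) :=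
    ⟨w, hw, hw.affineSpan_eq_top_iff_card_eq_finrank_add_one.2 (by simp)⟩
  have hcb : c = Finset.univ.centroid ℝ b := by
    rw [hc, Finset.centroid_eq_inv_card_smul_sum Finset.univ_nonempty, Finset.card_univ,
      Fintype.card_fin, Nat.cast_succ]
    rfl
  have hcoord : ∀ x ∈ K, ∀ j, b.coord j x ≤ 1 := fun x hx j =>
    (le_abs_self _).trans <| b.abs_coord_le_one_of_addHaar_convexHull_update_le volume <|
      hmax _ <| hKconv.convexHull_range_update_subset hwK hx
  rintro _ ⟨x, hx, rfl⟩
  refine ⟨lineMap c x (-(d : ℝ)⁻¹) - c, ⟨_, hwK ?_, rfl⟩, ?_⟩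
  · rw [hcb]
    exact b.lineMap_centroid_mem_convexHull (by simp) (hcoord x hx)
  · rcases eq_or_ne d 0 with rfl | hd
    · exact Subsingleton.elim _ _
    · change -(d : ℝ) • _ = x - c
      rw [← vsub_eq_sub, lineMap_vsub_left, smul_smul, neg_mul_neg,
        mul_inv_cancel₀ (Nat.cast_ne_zero.2 hd), one_smul, vsub_eq_sub]

theorem simplex_centroid_inclusion (d : ℕ) (K : Set (EuclideanSpace ℝ (Fin d)))
    (hKc : IsCompact K) (hKconv : Convex ℝ K) (hKint : (interior K).Nonempty)
    (w : Fin (d + 1) → EuclideanSpace ℝ (Fin d))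
    (hw : AffineIndependent ℝ w)
    (hwK : convexHull ℝ (Set.range w) ⊆ K)
    (hmax : ∀ w' : Fin (d + 1) → EuclideanSpace ℝ (Fin d),
      convexHull ℝ (Set.range w') ⊆ K →
      volume (convexHull ℝ (Set.range w')) ≤ volume (convexHull ℝ (Set.range w)))
    (c : EuclideanSpace ℝ (Fin d))
    (hc : c = ((d : ℝ) + 1)⁻¹ • ∑ i, w i) :
    (fun x => x - c) '' K ⊆ (-(d : ℝ)) • ((fun x => x - c) '' K) :=
  simplex_centroid_inclusion_general d K hKconv w hw hwK hmax c hc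
end

section
/- Let L ⊆ ℝ^d be a convex polytope containing the origin in its interior, and let S = conv{0, v_1, …, v_d} be a simplex of maximal volume among all simplices with d vertices from the vertex set of L and one vertex at the origin. Then every vertex of L lies in the parallelotope P = ∑_{i=1}^d [−v_i, v_i], and hence L ⊆ P. -/
open MeasureTheory Set Module Function

/-!
Replacing the vertex `v i` of the simplex `conv {0, v₁, …, v_d}` by a point `x` amounts to applying
the linear map that sends `v i ↦ x` and fixes the other `v j`. Its determinant is the `i`-th
coordinate of `x` in the basis `v`, so the volume gets multiplied by `|xᵢ|`, and maximality forces
`|xᵢ| ≤ 1` for every extreme point `x`. The interior point `0` makes the extreme points span, so the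
maximal simplex is nondegenerate and `v` is indeed a basis. Krein–Milman carries the bound from the
extreme points to all of `L`, since the parallelotope is closed and convex.
-/

def originSimplex {ι E : Type*} [AddCommGroup E] [Module ℝ E] (w : ι → E) : Set E :=
  convexHull ℝ (insert 0 (range w))

def parallelotope {ι E : Type*} [Fintype ι] [AddCommGroup E] [Module ℝ E] (w : ι → E) : Set E :=
  {x | ∃ β : ι → ℝ, (∀ i, β i ∈ Icc (-1 : ℝ) 1) ∧ x = ∑ i, β i • w i}

theorem Module.Basis.det_constr_update {ι R M : Type*} [Fintype ι] [DecidableEq ι] [CommRing R]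
    [AddCommGroup M] [Module R M] (b : Basis ι R M) (i : ι) (x : M) :
    LinearMap.det (b.constr R (update b i x)) = b.repr x i := by
  have hmat : LinearMap.toMatrix b b (b.constr R (update b i x)) = b.toMatrix (update b i x) := by
    ext
    rw [Basis.toMatrix_apply, LinearMap.toMatrix_apply, Basis.constr_basis]
  rw [← LinearMap.det_toMatrix b, hmat, Basis.toMatrix_update, Basis.toMatrix_self,
    ← Matrix.cramer_apply, Matrix.cramer_one]
  rfl

theorem exists_basis_forall_mem_of_span_eq_top {ι K V : Type*} [Fintype ι] [DivisionRing K]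
    [AddCommGroup V] [Module K V] [FiniteDimensional K V] (hι : Fintype.card ι = finrank K V)
    {s : Set V} (hs : Submodule.span K s = ⊤) : ∃ b : Basis ι K V, ∀ i, b i ∈ s := by
  let b := Basis.ofSpan hs.ge
  have := FiniteDimensional.fintypeBasisIndex b
  refine ⟨b.reindex (Fintype.equivOfCardEq (by rw [← finrank_eq_card_basis b, hι])), fun i => ?_⟩
  rw [Basis.reindex_apply]
  exact Basis.ofSpan_subset hs.ge (mem_range_self _)

section NormedSpace

variable {ι E : Type*} [NormedAddCommGroup E] [NormedSpace ℝ E]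

theorem parallelotope_eq_image [Fintype ι] (w : ι → E) :
    parallelotope w = Fintype.linearCombination ℝ w '' univ.pi fun _ => Icc (-1) 1 := by
  ext x
  simp only [parallelotope, mem_ofPred_eq, mem_image, mem_univ_pi, Fintype.linearCombination_apply,
    eq_comm (a := x)]

theorem convex_parallelotope [Fintype ι] (w : ι → E) : Convex ℝ (parallelotope w) := by
  rw [parallelotope_eq_image]
  exact (convex_pi fun _ _ => convex_Icc _ _).linear_image _

theorem isClosed_parallelotope [Fintype ι] (w : ι → E) : IsClosed (parallelotope w) := by
  rw [parallelotope_eq_image]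
  exact ((isCompact_univ_pi fun _ => isCompact_Icc).image
    (LinearMap.continuous_of_finiteDimensional _)).isClosed

theorem Module.Basis.mem_parallelotope_of_abs_repr_le_one [Fintype ι] (b : Basis ι ℝ E) {x : E}
    (hx : ∀ i, |b.repr x i| ≤ 1) : x ∈ parallelotope b :=
  ⟨fun i => b.repr x i, fun i => abs_le.1 (hx i), (b.sum_repr x).symm⟩

theorem LinearMap.image_originSimplex (f : E →ₗ[ℝ] E) (w : ι → E) :
    f '' originSimplex w = originSimplex (f ∘ w) := by
  rw [originSimplex, f.image_convexHull, image_insert_eq, map_zero, ← Set.range_comp]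
  rfl

theorem IsCompact.subset_of_extremePoints_subset {K P : Set E} (hKc : IsCompact K)
    (hKconv : Convex ℝ K) (hPc : IsClosed P) (hPconv : Convex ℝ P)
    (hKP : K.extremePoints ℝ ⊆ P) : K ⊆ P := by
  rw [← closure_convexHull_extremePoints hKc hKconv]
  exact closure_minimal (convexHull_min hKP hPconv) hPc

variable [FiniteDimensional ℝ E]

theorem span_extremePoints_eq_top {K : Set E} (hKc : IsCompact K) (hKconv : Convex ℝ K)
    (hK : (interior K).Nonempty) : Submodule.span ℝ (K.extremePoints ℝ) = ⊤ :=
  Submodule.eq_top_of_nonempty_interior' _ <| hK.mono <| interior_mono <|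
    hKc.subset_of_extremePoints_subset hKconv (Submodule.closed_of_finiteDimensional _)
      (Submodule.convex _) Submodule.subset_span

theorem Module.Basis.interior_originSimplex_nonempty [Fintype ι] (b : Basis ι ℝ E) :
    (interior (originSimplex b)).Nonempty := by
  rw [originSimplex, interior_convexHull_nonempty_iff_affineSpan_eq_top,
    ← AffineSubspace.coe_eq_univ_iff, affineSpan_insert_zero, b.span_eq, Submodule.top_coe]

variable [MeasurableSpace E] (μ : Measure E) [μ.IsAddHaarMeasure]

theorem Module.Basis.addHaar_originSimplex_pos [Fintype ι] (b : Basis ι ℝ E) :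
    0 < μ (originSimplex b) :=
  μ.measure_pos_of_nonempty_interior b.interior_originSimplex_nonempty

variable [BorelSpace E]

theorem span_range_eq_top_of_addHaar_originSimplex_ne_zero {w : ι → E}
    (hw : μ (originSimplex w) ≠ 0) : Submodule.span ℝ (range w) = ⊤ := by
  by_contra hspan
  refine hw (measure_mono_null ?_ (Measure.addHaar_submodule μ _ hspan))
  exact convexHull_min (insert_subset (Submodule.zero_mem _) Submodule.subset_span)
    (Submodule.convex _)

theorem Module.Basis.addHaar_originSimplex_update [Fintype ι] [DecidableEq ι] (b : Basis ι ℝ E)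
    (i : ι) (x : E) :
    μ (originSimplex (update b i x)) = ENNReal.ofReal |b.repr x i| * μ (originSimplex b) := by
  have himg : b.constr ℝ (update b i x) ∘ b = update b i x := funext (b.constr_basis ℝ _)
  rw [← himg, ← LinearMap.image_originSimplex, μ.addHaar_image_linearMap, b.det_constr_update]

theorem Module.Basis.abs_repr_le_one_of_forall_addHaar_originSimplex_le [Fintype ι]
    [DecidableEq ι] (b : Basis ι ℝ E) {X : Set E} (hbX : ∀ i, b i ∈ X)
    (hmax : ∀ w : ι → E, (∀ i, w i ∈ X) → μ (originSimplex w) ≤ μ (originSimplex b))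
    {x : E} (hx : x ∈ X) (i : ι) : |b.repr x i| ≤ 1 := by
  have hle := hmax (update b i x) ((forall_update_iff b fun _ y => y ∈ X).2 ⟨hx, fun j _ => hbX j⟩)
  rw [b.addHaar_originSimplex_update μ] at hle
  have hfin : μ (originSimplex b) ≠ ⊤ :=
    (((finite_range b).insert 0).isCompact_convexHull ℝ).measure_ne_top
  have hscale : ENNReal.ofReal |b.repr x i| ≤ 1 :=
    (ENNReal.mul_le_mul_iff_left (b.addHaar_originSimplex_pos μ).ne' hfin).1
      (hle.trans_eq (one_mul _).symm)
  exact ENNReal.ofReal_le_one.1 hscale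

end NormedSpace

theorem max_simplex_parallelotope (d : ℕ)
    (V : Finset (EuclideanSpace ℝ (Fin d)))
    (L : Set (EuclideanSpace ℝ (Fin d)))
    (hLpoly : L = convexHull ℝ (V : Set (EuclideanSpace ℝ (Fin d))))
    (h0 : 0 ∈ interior L)
    (v : Fin d → EuclideanSpace ℝ (Fin d))
    (hv : ∀ i, v i ∈ L.extremePoints ℝ)
    (hmax : ∀ w : Fin d → EuclideanSpace ℝ (Fin d), (∀ i, w i ∈ L.extremePoints ℝ) →
      volume (convexHull ℝ (insert 0 (Set.range w))) ≤
        volume (convexHull ℝ (insert 0 (Set.range v)))) :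
    (∀ x ∈ L.extremePoints ℝ,
        ∃ β : Fin d → ℝ, (∀ i, β i ∈ Set.Icc (-1 : ℝ) 1) ∧ x = ∑ i, β i • v i) ∧
      L ⊆ {x | ∃ β : Fin d → ℝ, (∀ i, β i ∈ Set.Icc (-1 : ℝ) 1) ∧ x = ∑ i, β i • v i} := by
  have hLc : IsCompact L := hLpoly ▸ V.finite_toSet.isCompact_convexHull ℝ
  have hLconv : Convex ℝ L := hLpoly ▸ convex_convexHull ℝ _
  have hcard : Fintype.card (Fin d) = finrank ℝ (EuclideanSpace ℝ (Fin d)) := by simp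
  obtain ⟨w, hw⟩ :=
    exists_basis_forall_mem_of_span_eq_top hcard (span_extremePoints_eq_top hLc hLconv ⟨0, h0⟩)
  have hvol : volume (originSimplex v) ≠ 0 :=
    ((w.addHaar_originSimplex_pos volume).trans_le (hmax w hw)).ne'
  let b := basisOfTopLeSpanOfCardEqFinrank v
    (span_range_eq_top_of_addHaar_originSimplex_ne_zero volume hvol).ge hcard
  have hb : ⇑b = v := coe_basisOfTopLeSpanOfCardEqFinrank ..
  have hext : L.extremePoints ℝ ⊆ parallelotope v := fun x hx =>
    hb ▸ b.mem_parallelotope_of_abs_repr_le_one fun i =>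
      b.abs_repr_le_one_of_forall_addHaar_originSimplex_le volume (hb ▸ hv) (hb ▸ hmax) hx i
  exact ⟨hext, hLc.subset_of_extremePoints_subset hLconv (isClosed_parallelotope v)
    (convex_parallelotope v) hext⟩
end

section
/- For every ε ∈ (0,1) and every set Q ⊆ ℝ^d whose convex hull contains the unit ball B^d, there exists a finite subset Q_f ⊆ Q whose convex hull contains (1−ε)·B^d. -/
/-!
Cover the unit ball by finitely many `ε`-balls centred at points of the ball; each centre lies in
the convex hull of finitely many points of `Q`, so for the union `F` of these finite sets every unit
vector is within `ε` of `C = convexHull F`. If a functional `f` satisfies `f < c` on `C`, then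
`f ≤ c + ε ‖f‖` on the unit sphere, hence `‖f‖ (1 - ε) ≤ c` and `f ≤ c` on the ball of radius
`1 - ε`; by Hahn–Banach no point of that ball can be separated from the closed convex set `C`.
-/

open Metric

theorem ContinuousLinearMap.opNorm_le_of_forall_sphere_apply_le {E : Type*}
    [NormedAddCommGroup E] [NormedSpace ℝ E] [Nontrivial E] {f : StrongDual ℝ E} {M : ℝ}
    (hf : ∀ w ∈ sphere (0 : E) 1, f w ≤ M) : ‖f‖ ≤ M := by
  have habs : ∀ w : E, ‖w‖ = 1 → ‖f w‖ ≤ M := fun w hw => by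
    have hneg := hf (-w) (by simpa using hw)
    rw [map_neg] at hneg
    exact abs_le.2 ⟨by linarith, hf w (by simpa using hw)⟩
  obtain ⟨w, hw⟩ := exists_norm_eq E zero_le_one
  exact f.opNorm_le_of_unit_norm ((norm_nonneg _).trans (habs w hw)) habs

theorem closedBall_subset_of_forall_sphere_dist_le {E : Type*}
    [NormedAddCommGroup E] [NormedSpace ℝ E] {C : Set E} (hconv : Convex ℝ C) (hclosed : IsClosed C)
    (hne : C.Nonempty) {ε : ℝ} (hnear : ∀ w ∈ sphere (0 : E) 1, ∃ u ∈ C, dist w u ≤ ε) :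
    closedBall 0 (1 - ε) ⊆ C := by
  intro x hx
  rcases subsingleton_or_nontrivial E with hE | hE
  · obtain ⟨y, hy⟩ := hne
    rwa [Subsingleton.elim x y]
  by_contra hxC
  obtain ⟨f, c, hfC, hcx⟩ := geometric_hahn_banach_closed_point hconv hclosed hxC
  have hf_sphere : ∀ w ∈ sphere (0 : E) 1, f w ≤ c + ‖f‖ * ε := fun w hw => by
    obtain ⟨u, huC, hwu⟩ := hnear w hw
    have hfwu : f (w - u) ≤ ‖f‖ * ε :=
      (le_abs_self _).trans <| (f.le_opNorm _).trans <|
        mul_le_mul_of_nonneg_left (by rwa [← dist_eq_norm]) (norm_nonneg f)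
    linarith [map_sub f w u, hfC u huC]
  have hfnorm := f.opNorm_le_of_forall_sphere_apply_le hf_sphere
  have hfx : f x ≤ ‖f‖ * (1 - ε) :=
    (le_abs_self _).trans <| (f.le_opNorm x).trans <|
      mul_le_mul_of_nonneg_left (mem_closedBall_zero_iff.1 hx) (norm_nonneg f)
  linarith

theorem Set.Finite.exists_finset_subset_convexHull {𝕜 E : Type*} [Field 𝕜] [LinearOrder 𝕜]
    [IsStrictOrderedRing 𝕜] [AddCommGroup E] [Module 𝕜 E] {s t : Set E} (ht : t.Finite)
    (hts : t ⊆ convexHull 𝕜 s) : ∃ F : Finset E, ↑F ⊆ s ∧ t ⊆ convexHull 𝕜 ↑F := by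
  classical
  have hpoint : ∀ x ∈ t, ∃ F : Finset E, ↑F ⊆ s ∧ x ∈ convexHull 𝕜 ↑F := fun x hx => by
    simpa [convexHull_eq_union_convexHull_finite_subsets s] using hts hx
  choose! F hFs hxF using hpoint
  refine ⟨ht.toFinset.biUnion F, ?_, fun x hx => convexHull_mono ?_ (hxF x hx)⟩
  · simpa using fun x hx => hFs x hx
  · intro y hy
    simpa using ⟨x, hx, hy⟩

theorem finite_subset_approx (d : ℕ) (ε : ℝ) (hε : ε ∈ Set.Ioo (0 : ℝ) 1)
    (Q : Set (EuclideanSpace ℝ (Fin d)))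
    (hQ : Metric.closedBall (0 : EuclideanSpace ℝ (Fin d)) 1 ⊆ convexHull ℝ Q) :
    ∃ F : Finset (EuclideanSpace ℝ (Fin d)), ↑F ⊆ Q ∧
      Metric.closedBall (0 : EuclideanSpace ℝ (Fin d)) (1 - ε) ⊆
        convexHull ℝ (F : Set (EuclideanSpace ℝ (Fin d))) := by
  obtain ⟨N, hN, hNfin, hcover⟩ := finite_cover_balls_of_compact 
    (isCompact_closedBall (0 : EuclideanSpace ℝ (Fin d)) 1) hε.1
  obtain ⟨F, hFQ, hNF⟩ := hNfin.exists_finset_subset_convexHull (hN.trans hQ)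
  have hnear : ∀ w ∈ closedBall (0 : EuclideanSpace ℝ (Fin d)) 1,
      ∃ u ∈ convexHull ℝ (F : Set (EuclideanSpace ℝ (Fin d))), dist w u ≤ ε := fun w hw => by
    obtain ⟨u, hu, hwu⟩ := Set.mem_iUnion₂.1 (hcover hw)
    exact ⟨u, hNF hu, (mem_ball.1 hwu).le⟩
  refine ⟨F, hFQ, closedBall_subset_of_forall_sphere_dist_le (convex_convexHull ℝ _)
    (F.finite_toSet.isClosed_convexHull (𝕜 := ℝ)) ?_ fun w hw => hnear w (sphere_subset_closedBall hw)⟩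
  obtain ⟨u, hu, -⟩ := hnear 0 (mem_closedBall_self zero_le_one)
  exact ⟨u, hu⟩
end

section
/- Let L ⊆ ℝ^d be a convex polytope with L ⊆ −λL for some λ > 0. Then the origin belongs to the interior of L. -/
open Pointwise

/-- If `-lam • y` lies in the interior of `s` and `y ∈ s`, then `0` is the convex combination
`(1 + lam)⁻¹ • (-lam • y) + (lam / (1 + lam)) • y` of an interior point and a point of `s`. -/
theorem Convex.zero_mem_interior_of_subset_neg_smul {E : Type*} [AddCommGroup E] [Module ℝ E]
    [TopologicalSpace E] [IsTopologicalAddGroup E] [ContinuousConstSMul ℝ E] {s : Set E}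
    (hs : Convex ℝ s) (hint : (interior s).Nonempty) {lam : ℝ} (hlam : 0 < lam)
    (h : s ⊆ (-lam) • s) : 0 ∈ interior s := by
  obtain ⟨x, hx⟩ := hint
  obtain ⟨y, hy, rfl⟩ := h (interior_subset hx)
  have hlam' : 0 < 1 + lam := by linarith
  have hsum : (1 + lam)⁻¹ + lam / (1 + lam) = 1 := by field_simp
  have hzero : (1 + lam)⁻¹ • (-lam) • y + (lam / (1 + lam)) • y = 0 := by
    rw [smul_smul, ← add_smul, inv_mul_eq_div, neg_div, neg_add_cancel, zero_smul]
  simpa only [hzero] using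
    hs.combo_interior_self_mem_interior hx hy (inv_pos.2 hlam') (by positivity) hsum

theorem origin_in_interior (d : ℕ) (lam : ℝ) (hlam : 0 < lam)
    (V : Finset (EuclideanSpace ℝ (Fin d)))
    (L : Set (EuclideanSpace ℝ (Fin d)))
    (hLpoly : L = convexHull ℝ (V : Set (EuclideanSpace ℝ (Fin d))))
    (hint : (interior L).Nonempty)
    (hL : L ⊆ (-lam) • L) :
    0 ∈ interior L :=
  (hLpoly ▸ convex_convexHull ℝ _ : Convex ℝ L).zero_mem_interior_of_subset_neg_smul hint hlam hL
end

section
/- Let v_1, …, v_d be linearly independent in ℝ^d and let L be a convex polytope with vertices including v_1, …, v_d, satisfying L ⊆ −λL. Let y be the point where the ray from 0 in direction −(v_1+⋯+v_d) meets the boundary of L, and choose by Carathéodory at most d vertices v_1', …, v_k' of L with y ∈ conv{v_1', …, v_k'}. Set L' = conv{v_1, …, v_d, v_1', …, v_k'}. Then (v_1+⋯+v_d)/d ∈ −λ·L'. -/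
open Pointwise

theorem centroid_in_scaled_Lprime (d : ℕ) (lam : ℝ) (hlam : 0 < lam)
    (V : Finset (EuclideanSpace ℝ (Fin d)))
    (L : Set (EuclideanSpace ℝ (Fin d)))
    (hLpoly : L = convexHull ℝ (V : Set (EuclideanSpace ℝ (Fin d))))
    (h0 : 0 ∈ interior L)
    (hL : L ⊆ (-lam) • L)
    (v : Fin d → EuclideanSpace ℝ (Fin d))
    (hvind : LinearIndependent ℝ v)
    (hv : ∀ i, v i ∈ L.extremePoints ℝ)
    (y : EuclideanSpace ℝ (Fin d))
    (hy : y ∈ frontier L)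
    (hyray : ∃ t : ℝ, 0 ≤ t ∧ y = t • (-(∑ i, v i)))
    (k : ℕ) (hk : k ≤ d)
    (w : Fin k → EuclideanSpace ℝ (Fin d))
    (hw : ∀ j, w j ∈ L.extremePoints ℝ)
    (hyw : y ∈ convexHull ℝ (Set.range w))
    (L' : Set (EuclideanSpace ℝ (Fin d)))
    (hL' : L' = convexHull ℝ (Set.range v ∪ Set.range w)) :
    ((d : ℝ))⁻¹ • ∑ i, v i ∈ (-lam) • L' := by
  have hconvL : Convex ℝ L := hLpoly ▸ convex_convexHull ℝ _
  have hconvL' : Convex ℝ L' := hL' ▸ convex_convexHull ℝ _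
  obtain ⟨t, ht0, hyt⟩ := hyray
  have hynotint : y ∉ interior L := hy.2
  have hy_ne : y ≠ 0 := fun h => hynotint (h ▸ h0)
  have hd : 0 < d := by
    rcases Nat.eq_zero_or_pos d with h | h
    · exfalso; apply hy_ne; subst h; exact Subsingleton.elim y 0
    · exact h
  have hdR : (0:ℝ) < (d:ℝ) := by exact_mod_cast hd
  have ht : 0 < t := by
    rcases ht0.eq_or_lt with h | h
    · exfalso; apply hy_ne; rw [hyt, ← h, zero_smul]
    · exact h
  set s : EuclideanSpace ℝ (Fin d) := ∑ i, v i with hs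
  -- memberships in L'
  have hyL' : y ∈ L' := by
    rw [hL']
    exact convexHull_mono Set.subset_union_right hyw
  have hvL' : ∀ i, v i ∈ L' := fun i => by
    rw [hL']
    exact subset_convexHull ℝ _ (Or.inl ⟨i, rfl⟩)
  -- centroid in L'
  have hcL' : (d:ℝ)⁻¹ • s ∈ L' := by
    have := hconvL'.sum_mem (t := Finset.univ) (w := fun _ : Fin d => (d:ℝ)⁻¹)
      (z := v) (fun i _ => by positivity)
      (by rw [Finset.sum_const, Finset.card_univ, Fintype.card_fin, nsmul_eq_mul]; field_simp)
      (fun i _ => hvL' i)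
    simpa [hs, Finset.smul_sum] using this
  -- centroid in L
  have hvL : ∀ i, v i ∈ L := fun i => (hv i).1
  have hcL : (d:ℝ)⁻¹ • s ∈ L := by
    have := hconvL.sum_mem (t := Finset.univ) (w := fun _ : Fin d => (d:ℝ)⁻¹)
      (z := v) (fun i _ => by positivity)
      (by rw [Finset.sum_const, Finset.card_univ, Fintype.card_fin, nsmul_eq_mul]; field_simp)
      (fun i _ => hvL i)
    simpa [hs, Finset.smul_sum] using this
  -- z = -(1/(lam d)) s ∈ L
  obtain ⟨x, hxL, hxe'⟩ := hL hcL
  have hxe : (-lam) • x = (d:ℝ)⁻¹ • s := hxe'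
  have hzL : (-(lam * d)⁻¹) • s ∈ L := by
    have hx : x = (-(lam * d)⁻¹) • s := by
      have : (-lam)⁻¹ • ((-lam) • x) = (-lam)⁻¹ • ((d:ℝ)⁻¹ • s) := by rw [hxe]
      rw [smul_smul, inv_mul_cancel₀ (by nlinarith : (-lam) ≠ 0), one_smul, smul_smul] at this
      rw [this]
      congr 1
      field_simp
    rwa [← hx]
  -- t ≥ (lam*d)⁻¹
  have htge : (lam * (d:ℝ))⁻¹ ≤ t := by
    by_contra hlt
    push_neg at hlt
    have hprod : lam * d * t < 1 := by
      have h1 : 0 < lam * (d:ℝ) := by positivity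
      calc lam * d * t < lam * d * (lam * d)⁻¹ := by
            exact mul_lt_mul_of_pos_left hlt h1
        _ = 1 := mul_inv_cancel₀ (ne_of_gt h1)
    have hcomb : y = (1 - lam * d * t) • (0 : EuclideanSpace ℝ (Fin d))
        + (lam * d * t) • ((-(lam * d)⁻¹) • s) := by
      rw [hyt]
      rw [smul_zero, zero_add, smul_smul]
      have hne : lam * (d:ℝ) ≠ 0 := by positivity
      rw [show lam * ↑d * t * -(lam * ↑d)⁻¹ = -t by field_simp]
      module
    have : y ∈ interior L :=
      hcomb ▸ hconvL.combo_interior_closure_mem_interior h0 (subset_closure hzL)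
        (by nlinarith) (by positivity) (by ring)
    exact hynotint this
  -- 0 ∈ L'
  have h0L' : (0 : EuclideanSpace ℝ (Fin d)) ∈ L' := by
    have hβ : (0:ℝ) < 1 + t * d := by positivity
    have hcomb : (0 : EuclideanSpace ℝ (Fin d))
        = ((1 + t*d)⁻¹) • y + (1 - (1 + t*d)⁻¹) • ((d:ℝ)⁻¹ • s) := by
      rw [hyt]
      have h1 : ((1 + t*d)⁻¹) • (t • (-s)) = (-(t * (1 + t*d)⁻¹)) • s := by
        rw [smul_smul]; module
      rw [h1, smul_smul]
      rw [show (1 - (1 + t*d)⁻¹) * (d:ℝ)⁻¹ = t * (1 + t*d)⁻¹ by field_simp; ring]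
      module
    rw [hcomb]
    exact hconvL' hyL' hcL' (by positivity)
      (by rw [sub_nonneg]; exact inv_le_one_of_one_le₀ (by nlinarith)) (by ring)
  -- z ∈ L', on segment [0, y]
  have hα1 : (lam * d * t)⁻¹ ≤ 1 := by
    rw [inv_le_one_iff₀]
    right
    calc (1:ℝ) = lam * d * (lam * d)⁻¹ := by field_simp
      _ ≤ lam * d * t := by
          apply mul_le_mul_of_nonneg_left htge (by positivity)
  have hα0 : 0 < (lam * d * t)⁻¹ := by positivity
  have hzL' : (-(lam * d)⁻¹) • s ∈ L' := by
    have hcomb : (-(lam * d)⁻¹ : ℝ) • s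
        = ((lam * d * t)⁻¹) • y + (1 - (lam * d * t)⁻¹) • (0 : EuclideanSpace ℝ (Fin d)) := by
      rw [hyt, smul_zero, add_zero, smul_smul]
      rw [show (lam * ↑d * t)⁻¹ * t = (lam * ↑d)⁻¹ by field_simp]
      module
    rw [hcomb]
    exact hconvL' hyL' h0L' (le_of_lt hα0) (by linarith) (by ring)
  rw [Set.mem_smul_set]
  refine ⟨(-(lam * d)⁻¹) • s, hzL', ?_⟩
  rw [smul_smul]
  congr 1
  field_simp
end
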